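/- arXiv:1406.5044 — 2 statements merged into one kernel-verified Lean document; each statement's English description precedes it below -/
import Mathlib

section
/- The quotient ring C[z1,z2]/⟨(z1+z2)², z1²+z2²−2⟩ is a 4-dimensional C-vector space with basis represented by the monomials {1, z1, z2, z2²}. -/
/-!
Since 2 is invertible, the ideal contains `(y² - 1)²` and `x - (y³ - 2y)`: eliminating `x`
identifies the quotient with `K[y]/((y² - 1)²)`, the coordinate ring of two double points. Its
power basis `1, y, y², y³` becomes `1, x, y, y²` after the unitriangular substitution
`y³ = x + 2y`.
-/

namespace DoublePoints

variable {K : Type*} [Field K]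

local notation "𝔸" => AdjoinRoot ((Polynomial.X ^ 2 - 1) ^ 2 : Polynomial K)
local notation "ρ" => AdjoinRoot.root ((Polynomial.X ^ 2 - 1) ^ 2 : Polynomial K)

section

open Polynomial

theorem natDegree_sq_sub_one_sq : ((X ^ 2 - 1) ^ 2 : K[X]).natDegree = 4 := by
  compute_degree!

theorem sq_sub_one_sq_root : ((ρ : 𝔸) ^ 2 - 1) ^ 2 = 0 := by
  have h := AdjoinRoot.mk_self (f := ((X ^ 2 - 1) ^ 2 : K[X]))
  rwa [map_pow, map_sub, map_pow, AdjoinRoot.mk_X, map_one] at h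

theorem finrank_adjoinRoot : Module.finrank K 𝔸 = 4 := by
  have hf : (X ^ 2 - 1) ^ 2 ≠ (0 : K[X]) :=
    ne_zero_of_natDegree_gt (n := 0) (by rw [natDegree_sq_sub_one_sq]; norm_num)
  rw [(AdjoinRoot.powerBasis hf).finrank, AdjoinRoot.powerBasis_dim, natDegree_sq_sub_one_sq]

theorem linearIndependent_adjoinRoot :
    LinearIndependent K ![(1 : 𝔸), ρ ^ 3 - 2 * ρ, ρ, ρ ^ 2] := by
  rw [Fintype.linearIndependent_iff]
  intro g hg
  set q : K[X] := C (g 0) + C (g 2 - 2 * g 1) * X + C (g 3) * X ^ 2 + C (g 1) * X ^ 3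
  have hq : AdjoinRoot.mk ((X ^ 2 - 1) ^ 2) q = 0 := by
    rw [Fin.sum_univ_four] at hg
    simp only [Matrix.cons_val, Algebra.smul_def, mul_one] at hg
    simp only [← AdjoinRoot.aeval_eq, q, map_add, map_mul, map_pow, aeval_C, aeval_X, map_sub,
      map_ofNat]
    linear_combination hg
  have hq0 : q = 0 := by
    refine eq_zero_of_dvd_of_natDegree_lt (AdjoinRoot.mk_eq_zero.mp hq) ?_
    rw [natDegree_sq_sub_one_sq]
    exact (by simp only [q]; compute_degree : q.natDegree ≤ 3).trans_lt (by norm_num)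
  have hc (n : ℕ) : q.coeff n = 0 := by rw [hq0, coeff_zero]
  have h0 : g 0 = 0 := by simpa [q] using hc 0
  have h1 : g 2 - 2 * g 1 = 0 := by simpa [q, coeff_X] using hc 1
  have h2 : g 3 = 0 := by simpa [q, coeff_X, coeff_X_pow] using hc 2
  have h3 : g 1 = 0 := by simpa [q, coeff_X, coeff_X_pow] using hc 3
  intro i
  fin_cases i
  exacts [h0, h3, show g 2 = 0 by linear_combination h1 + 2 * h3, h2]

end

open MvPolynomial

variable (K) in
noncomputable def ideal : Ideal (MvPolynomial (Fin 2) K) :=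
  Ideal.span {(X 0 + X 1) ^ 2, X 0 ^ 2 + X 1 ^ 2 - 2}

local notation "Q" => MvPolynomial (Fin 2) K ⧸ ideal K

theorem isUnit_two {σ : Type*} (h2 : (2 : K) ≠ 0) : IsUnit (2 : MvPolynomial σ K) := by
  rw [← map_ofNat C 2]
  exact (IsUnit.mk0 _ h2).map C

theorem sq_sub_one_sq_mem_ideal (h2 : (2 : K) ≠ 0) : (X 1 ^ 2 - 1) ^ 2 ∈ ideal K :=
  (Ideal.unit_mul_mem_iff_mem _ (isUnit_two h2)).mp <| Ideal.mem_span_pair.mpr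
    ⟨1 - X 0 * X 1, 2 * X 1 ^ 2 + X 0 * X 1 - 1, by ring⟩

theorem X_zero_sub_mem_ideal (h2 : (2 : K) ≠ 0) : X 0 - (X 1 ^ 3 - 2 * X 1) ∈ ideal K :=
  (Ideal.unit_mul_mem_iff_mem _ (isUnit_two h2)).mp <| Ideal.mem_span_pair.mpr
    ⟨X 0, -(2 * X 1 + X 0), by ring⟩

theorem mk_X_zero (h2 : (2 : K) ≠ 0) :
    Ideal.Quotient.mk (ideal K) (X 0) =
      Ideal.Quotient.mk (ideal K) (X 1) ^ 3 - 2 * Ideal.Quotient.mk (ideal K) (X 1) := by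
  rw [← map_pow, ← map_ofNat (Ideal.Quotient.mk (ideal K)) 2, ← map_mul, ← map_sub,
    Ideal.Quotient.eq]
  exact X_zero_sub_mem_ideal h2

noncomputable def toAdjoinRoot : Q →ₐ[K] 𝔸 :=
  Ideal.Quotient.liftₐ (ideal K) (aeval ![ρ ^ 3 - 2 * ρ, ρ]) fun a ha => by
    obtain ⟨c, d, rfl⟩ := Ideal.mem_span_pair.mp ha
    simp only [map_add, map_mul, map_sub, map_pow, map_ofNat, aeval_X, Matrix.cons_val_zero,
      Matrix.cons_val_one]
    linear_combination (aeval ![ρ ^ 3 - 2 * ρ, ρ] c * ρ ^ 2 +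
      aeval ![ρ ^ 3 - 2 * ρ, ρ] d * (ρ ^ 2 - 2)) * sq_sub_one_sq_root (K := K)

theorem toAdjoinRoot_mk (p : MvPolynomial (Fin 2) K) :
    toAdjoinRoot (Ideal.Quotient.mk (ideal K) p) = aeval ![ρ ^ 3 - 2 * ρ, ρ] p :=
  Ideal.Quotient.liftₐ_apply _ _ _ _

noncomputable def ofAdjoinRoot (h2 : (2 : K) ≠ 0) : 𝔸 →ₐ[K] Q :=
  AdjoinRoot.liftAlgHom _ (Algebra.ofId K Q) (Ideal.Quotient.mk (ideal K) (X 1)) <| by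
    simpa [Polynomial.eval₂_pow, Polynomial.eval₂_sub] using
      Ideal.Quotient.eq_zero_iff_mem.mpr (sq_sub_one_sq_mem_ideal h2)

noncomputable def equivAdjoinRoot (h2 : (2 : K) ≠ 0) : Q ≃ₐ[K] 𝔸 :=
  AlgEquiv.ofAlgHom toAdjoinRoot (ofAdjoinRoot h2)
    (AdjoinRoot.algHom_ext <| by simp [ofAdjoinRoot, toAdjoinRoot_mk])
    (Ideal.Quotient.algHom_ext _ <| MvPolynomial.algHom_ext fun i => by
      fin_cases i
      · simp only [ofAdjoinRoot, Fin.zero_eta, AlgHom.coe_comp, Ideal.Quotient.mkₐ_eq_mk,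
          Function.comp_apply, toAdjoinRoot_mk, aeval_X, Matrix.cons_val_zero, map_sub, map_pow,
          map_mul, AdjoinRoot.liftAlgHom_root, AlgHom.id_comp]
        rw [map_ofNat, mk_X_zero h2]
      · simp [ofAdjoinRoot, toAdjoinRoot_mk])

theorem finrank_quotient (h2 : (2 : K) ≠ 0) : Module.finrank K Q = 4 :=
  (equivAdjoinRoot h2).toLinearEquiv.finrank_eq.trans finrank_adjoinRoot

theorem linearIndependent_quotient (h2 : (2 : K) ≠ 0) :
    LinearIndependent K (Ideal.Quotient.mk (ideal K) ∘ ![1, X 0, X 1, X 1 ^ 2]) := by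
  refine .of_comp (equivAdjoinRoot h2).toLinearMap ?_
  convert linearIndependent_adjoinRoot (K := K) using 1
  ext i
  fin_cases i <;> simp [equivAdjoinRoot, toAdjoinRoot_mk]

noncomputable def basis (h2 : (2 : K) ≠ 0) : Module.Basis (Fin 4) K Q :=
  basisOfLinearIndependentOfCardEqFinrank (linearIndependent_quotient h2)
    (by rw [finrank_quotient h2, Fintype.card_fin])

theorem basis_apply (h2 : (2 : K) ≠ 0) (i : Fin 4) :
    basis h2 i = Ideal.Quotient.mk (ideal K) (![1, X 0, X 1, X 1 ^ 2] i) :=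
  congrFun (coe_basisOfLinearIndependentOfCardEqFinrank (linearIndependent_quotient h2) _) i

end DoublePoints

open MvPolynomial

/-- The quotient ring ℂ[z1,z2]/⟨(z1+z2)², z1²+z2²−2⟩ is a 4-dimensional ℂ-vector space
with basis given by (the images of) the monomials {1, z1, z2, z2²}. -/
theorem stmt_8 :
    ∀ I : Ideal (MvPolynomial (Fin 2) ℂ),
      I = Ideal.span {(X 0 + X 1) ^ 2, X 0 ^ 2 + X 1 ^ 2 - 2} →
      Module.finrank ℂ (MvPolynomial (Fin 2) ℂ ⧸ I) = 4 ∧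
      ∃ B : Module.Basis (Fin 4) ℂ (MvPolynomial (Fin 2) ℂ ⧸ I),
        B 0 = Ideal.Quotient.mk I 1 ∧
        B 1 = Ideal.Quotient.mk I (X 0) ∧
        B 2 = Ideal.Quotient.mk I (X 1) ∧
        B 3 = Ideal.Quotient.mk I ((X 1) ^ 2) := by
  rintro I rfl
  open DoublePoints in
  exact ⟨finrank_quotient two_ne_zero, basis two_ne_zero, basis_apply _ 0, basis_apply _ 1,
    basis_apply _ 2, basis_apply _ 3⟩
end

section
/- Let R1, R2 ∈ C^{10} be given by R1 = (−1, −t, 1, t, t, −1, −t, 1, t, t) and R2 = N(0,1,0,−1,−1,0,1,0,−1,−1) with t = χ s/(m² − (1+χ)s) and N = χ s²/(2(m² − (1+χ)s)), assuming t ≠ 0 and N ≠ 0. Then there exist unique vectors M1, M2 in the 2-dimensional space of weight vectors satisfying the eight contour constraints (ω_i = ω_{i+5} for i = 1..5; Ω·(0,1,0,1,0,0,1,0,1,0)=0; Ω·(1,−1,1,−1,0,1,−1,1,−1,0)=0; Ω·(1,1,−1,−1,2,1,1,−1,−1,2)=0) such that M1·R1 = 1, M1·R2 = 0, M2·R1 =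 0, M2·R2 = 1. -/
/-!
The eight contour constraints cut the weight space down to the plane of vectors
`(a, b, -a, -b, -a - b)` repeated twice. On that plane the pairings with `R₁` and `R₂` are
`-2((2 + t)a + 3tb)` and `2N(a + 3b)`, a 2 × 2 linear system in `(a, b)` with determinant
`-24N ≠ 0`. Hence any prescribed pair of pairings, in particular `(1, 0)` and `(0, 1)`, is
realised by exactly one admissible weight vector.
-/

open Matrix

variable {K : Type*} [Field K]

def contourMatrix : Matrix (Fin 8) (Fin 10) K :=
  !![1,0,0,0,0,-1,0,0,0,0;
     0,1,0,0,0,0,-1,0,0,0;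
     0,0,1,0,0,0,0,-1,0,0;
     0,0,0,1,0,0,0,0,-1,0;
     0,0,0,0,1,0,0,0,0,-1;
     0,1,0,1,0,0,1,0,1,0;
     1,-1,1,-1,0,1,-1,1,-1,0;
     1,1,-1,-1,2,1,1,-1,-1,2]

def residue₁ (t : K) : Fin 10 → K := ![-1, -t, 1, t, t, -1, -t, 1, t, t]

def residue₂ (N : K) : Fin 10 → K := fun i => N * ![0, 1, 0, -1, -1, 0, 1, 0, -1, -1] i

def contourVec (a b : K) : Fin 10 → K := ![a, b, -a, -b, -a - b, a, b, -a, -b, -a - b]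

theorem contourMatrix_mulVec_contourVec (a b : K) : contourMatrix *ᵥ contourVec a b = 0 := by
  funext i
  fin_cases i <;>
    simp only [contourMatrix, contourVec, mulVec, dotProduct, Fin.sum_univ_succ, Fin.sum_univ_zero,
      of_apply, cons_val', cons_val_zero, cons_val_succ, Fin.zero_eta, Fin.mk_one, Fin.reduceFinMk,
      cons_val, Pi.zero_apply] <;> ring

theorem eq_contourVec_of_mulVec_eq_zero [CharZero K] {y : Fin 10 → K}
    (h : contourMatrix *ᵥ y = 0) : y = contourVec (y 0) (y 1) := by
  have row : ∀ i, (contourMatrix *ᵥ y) i = 0 := fun i => congrFun h i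
  simp only [Fin.forall_fin_succ, IsEmpty.forall_iff, and_true] at row
  simp only [contourMatrix, mulVec, dotProduct, Fin.sum_univ_succ, Fin.sum_univ_zero, of_apply,
    cons_val', cons_val_zero, cons_val_succ, Fin.succ_zero_eq_one, Fin.succ_one_eq_two, Fin.reduceSucc,
    cons_val_one, cons_val] at row
  obtain ⟨h0, h1, h2, h3, h4, h5, h6, h7⟩ := row
  have h13 : y 1 + y 3 = 0 := by linear_combination (h5 + h1 + h3) / 2
  have h02 : y 0 + y 2 = 0 := by linear_combination (h6 + h0 + h2 - h1 - h3) / 2 + h13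
  have h014 : y 0 + y 1 + y 4 = 0 := by
    linear_combination (h7 + h0 + h1 - h2 - h3 + 2 * h4) / 4 + (h02 + h13) / 2
  funext i
  fin_cases i <;>
    simp only [Fin.zero_eta, Fin.mk_one, Fin.reduceFinMk, Fin.isValue, contourVec, cons_val_zero,
      cons_val_one, cons_val]
  · linear_combination h02
  · linear_combination h13
  · linear_combination h014
  · linear_combination -h0
  · linear_combination -h1
  · linear_combination h02 - h2
  · linear_combination h13 - h3
  · linear_combination h014 - h4

theorem contourMatrix_mulVec_eq_zero_iff [CharZero K] (y : Fin 10 → K) :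
    contourMatrix *ᵥ y = 0 ↔ y = contourVec (y 0) (y 1) :=
  ⟨eq_contourVec_of_mulVec_eq_zero, fun h => h ▸ contourMatrix_mulVec_contourVec _ _⟩

theorem contourVec_dotProduct_residue₁ (t a b : K) :
    contourVec a b ⬝ᵥ residue₁ t = -2 * ((2 + t) * a + 3 * t * b) := by
  simp only [contourVec, residue₁, dotProduct, Fin.sum_univ_succ, Fin.sum_univ_zero, cons_val_zero,
    cons_val_succ]
  ring

theorem contourVec_dotProduct_residue₂ (N a b : K) :
    contourVec a b ⬝ᵥ residue₂ N = 2 * N * (a + 3 * b) := by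
  simp only [contourVec, residue₂, dotProduct, Fin.sum_univ_succ, Fin.sum_univ_zero, cons_val_zero,
    cons_val_succ]
  ring

theorem contour_system_iff [CharZero K] {t N : K} (hN : N ≠ 0) {a b c d : K} :
    -2 * ((2 + t) * a + 3 * t * b) = c ∧ 2 * N * (a + 3 * b) = d ↔
      a = -c / 4 - t * d / (4 * N) ∧ b = c / 12 + (2 + t) * d / (12 * N) := by
  constructor
  · rintro ⟨rfl, rfl⟩
    constructor <;> field_simp <;> ring
  · rintro ⟨rfl, rfl⟩
    constructor <;> field_simp <;> ring

theorem contour_conditions_iff [CharZero K] {t N : K} (hN : N ≠ 0) (c d : K) (y : Fin 10 → K) :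
    (contourMatrix *ᵥ y = 0 ∧ y ⬝ᵥ residue₁ t = c ∧ y ⬝ᵥ residue₂ N = d) ↔
      y = contourVec (-c / 4 - t * d / (4 * N)) (c / 12 + (2 + t) * d / (12 * N)) := by
  rw [contourMatrix_mulVec_eq_zero_iff]
  constructor
  · rintro ⟨hy, h₁, h₂⟩
    rw [hy, contourVec_dotProduct_residue₁] at h₁
    rw [hy, contourVec_dotProduct_residue₂] at h₂
    obtain ⟨ha, hb⟩ := (contour_system_iff hN).1 ⟨h₁, h₂⟩
    rw [hy, ha, hb]
  · rintro rfl
    refine ⟨rfl, ?_⟩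
    rw [contourVec_dotProduct_residue₁, contourVec_dotProduct_residue₂]
    exact (contour_system_iff hN).2 ⟨rfl, rfl⟩

theorem existsUnique_contour [CharZero K] (t : K) {N : K} (hN : N ≠ 0) (c d : K) :
    ∃! y : Fin 10 → K, contourMatrix *ᵥ y = 0 ∧ y ⬝ᵥ residue₁ t = c ∧ y ⬝ᵥ residue₂ N = d := by
  simp only [contour_conditions_iff hN]
  exact existsUnique_eq

theorem stmt_14_general (t N : ℂ) (hN : N ≠ 0) :
    let M : Matrix (Fin 8) (Fin 10) ℂ :=
      !![1,0,0,0,0,-1,0,0,0,0;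
         0,1,0,0,0,0,-1,0,0,0;
         0,0,1,0,0,0,0,-1,0,0;
         0,0,0,1,0,0,0,0,-1,0;
         0,0,0,0,1,0,0,0,0,-1;
         0,1,0,1,0,0,1,0,1,0;
         1,-1,1,-1,0,1,-1,1,-1,0;
         1,1,-1,-1,2,1,1,-1,-1,2]
    let R1 : Fin 10 → ℂ := ![-1, -t, 1, t, t, -1, -t, 1, t, t]
    let R2 : Fin 10 → ℂ := fun i => N * ![0, 1, 0, -1, -1, 0, 1, 0, -1, -1] i
    let dot : (Fin 10 → ℂ) → (Fin 10 → ℂ) → ℂ := fun x y => ∑ i, x i * y i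
    (∃! M1 : Fin 10 → ℂ, M.mulVec M1 = 0 ∧ dot M1 R1 = 1 ∧ dot M1 R2 = 0) ∧
    (∃! M2 : Fin 10 → ℂ, M.mulVec M2 = 0 ∧ dot M2 R1 = 0 ∧ dot M2 R2 = 1) :=
  ⟨existsUnique_contour t hN 1 0, existsUnique_contour t hN 0 1⟩

/-- Existence and uniqueness of the one-mass master contours M1, M2: weight vectors
satisfying the eight contour constraints and normalized against the residue vectors
R1 = (−1,−t,1,t,t,−1,−t,1,t,t), R2 = N(0,1,0,−1,−1,0,1,0,−1,−1), where
t = χs/(m² − (1+χ)s) and N = χs²/(2(m² − (1+χ)s)). -/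
theorem stmt_14 (s χ msq : ℂ) (hs : s ≠ 0) (hχ : χ ≠ 0)
    (hm : msq ≠ (1 + χ) * s)
    (t N : ℂ)
    (htdef : t = χ * s / (msq - (1 + χ) * s))
    (hNdef : N = χ * s ^ 2 / (2 * (msq - (1 + χ) * s)))
    (ht : t ≠ 0) (hN : N ≠ 0) :
    let M : Matrix (Fin 8) (Fin 10) ℂ :=
      !![1,0,0,0,0,-1,0,0,0,0;
         0,1,0,0,0,0,-1,0,0,0;
         0,0,1,0,0,0,0,-1,0,0;
         0,0,0,1,0,0,0,0,-1,0;
         0,0,0,0,1,0,0,0,0,-1;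
         0,1,0,1,0,0,1,0,1,0;
         1,-1,1,-1,0,1,-1,1,-1,0;
         1,1,-1,-1,2,1,1,-1,-1,2]
    let R1 : Fin 10 → ℂ := ![-1, -t, 1, t, t, -1, -t, 1, t, t]
    let R2 : Fin 10 → ℂ := fun i => N * ![0, 1, 0, -1, -1, 0, 1, 0, -1, -1] i
    let dot : (Fin 10 → ℂ) → (Fin 10 → ℂ) → ℂ := fun x y => ∑ i, x i * y i
    (∃! M1 : Fin 10 → ℂ, M.mulVec M1 = 0 ∧ dot M1 R1 = 1 ∧ dot M1 R2 = 0) ∧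
    (∃! M2 : Fin 10 → ℂ, M.mulVec M2 = 0 ∧ dot M2 R1 = 0 ∧ dot M2 R2 = 1) :=
  stmt_14_general t N hN
end
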